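/- Let G be a finitely generated two-ended group. Then there exists a subgroup H of index at most 2 in G and a surjective homomorphism φ: H → ℤ with finite kernel; consequently G contains a subgroup of index exactly 2. -/

import Mathlib

/-- The Cayley graph of a group `G` with respect to a (symmetric) set `S`. -/
def cayleyGraph (G : Type*) [Group G] (S : Set G) : SimpleGraph G where
  Adj x y := x ≠ y ∧ (x⁻¹ * y ∈ S ∨ y⁻¹ * x ∈ S)
  symm := ⟨fun _ _ h => ⟨h.1.symm, h.2.symm⟩⟩
  loopless := ⟨fun _ h => h.1 rfl⟩

/-- A graph has exactly two ends. -/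
def HasExactlyTwoEnds {V : Type*} (Γ : SimpleGraph V) : Prop :=
  ∃ e₁ e₂ : Γ.end, e₁ ≠ e₂ ∧ ∀ e : Γ.end, e = e₁ ∨ e = e₂

/-!
Choose a finite connected set `K` of vertices of the Cayley graph whose complement is the union of
the two infinite connected sides `A` and `B` cut out by the two ends. Since there are only two
ends, every translate `g • A` agrees up to finitely many vertices with `A` or with `B`; hence
`H = {g | g • A ∆ A finite}` has index at most `2`, and `g ↦ |A \ g • A| - |g • A \ A|` is a
homomorphism `H → ℤ`. Let `g` be in its kernel with `g • K ∩ K = ∅`. Connectivity of `K`, `A` and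
`B` puts `g • K` inside one side, and then each side is nested with a translated side; the
vanishing of the homomorphism at `g` and at `g⁻¹` forces `g • A = A` or `g • B = B`. That is
impossible: an edge leaving a side ends in `K`, and `g` carries it to an edge leaving the same
side and ending in `g • K`. So the kernel lies in the finite set `K * K⁻¹`, and dividing by a
generator of the image yields a surjection onto `ℤ`.
-/

open scoped symmDiff Pointwise
open CategoryTheory Opposite

theorem MonoidHom.exists_surjective_int_of_finite_ker {H : Type*} [Group H] [Infinite H]
    (f : H →* Multiplicative ℤ) (hf : Finite f.ker) :
    ∃ φ : H →* Multiplicative ℤ, Function.Surjective φ ∧ Finite φ.ker := by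
  have : Infinite f.range := by
    by_contra hfin
    rw [not_infinite_iff_finite] at hfin
    have hcard : Nat.card f.ker * Nat.card f.range ≠ 0 :=
      mul_ne_zero Nat.card_pos.ne' Nat.card_pos.ne'
    rw [← Subgroup.index_ker, Subgroup.card_mul_index] at hcard
    have := Nat.finite_of_card_ne_zero hcard
    exact not_finite H
  refine ⟨(intCyclicMulEquiv (G := f.range)).symm.toMonoidHom.comp f.rangeRestrict,
    (intCyclicMulEquiv (G := f.range)).symm.surjective.comp f.rangeRestrict_surjective, ?_⟩
  rwa [MonoidHom.ker_comp_of_injective _ _ (MulEquiv.injective _), MonoidHom.ker_rangeRestrict]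

theorem MonoidHom.exists_index_eq_two_of_surjective {G : Type*} [Group G]
    (φ : G →* Multiplicative ℤ) (hφ : Function.Surjective φ) :
    ∃ K : Subgroup G, K.index = 2 :=
  ⟨(AddSubgroup.zmultiples (2 : ℤ)).toSubgroup.comap φ, by
    rw [Subgroup.index_comap_of_surjective _ hφ, AddSubgroup.index_toSubgroup,
      Int.index_zmultiples]; rfl⟩

theorem Subgroup.exists_index_eq_two_of_surjective_int {G : Type*} [Group G] {H : Subgroup G}
    (hH : H.index = 1 ∨ H.index = 2) (φ : H →* Multiplicative ℤ)
    (hφ : Function.Surjective φ) : ∃ K : Subgroup G, K.index = 2 := by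
  rcases hH with hH | hH
  · obtain ⟨K, hK⟩ := φ.exists_index_eq_two_of_surjective hφ
    exact ⟨K.map H.subtype, by rw [Subgroup.index_map_subtype, hK, hH]⟩
  · exact ⟨H, hH⟩

namespace Set

variable {α : Type*} {s t u : Set α}

theorem finite_symmDiff_comm : (s ∆ t).Finite ↔ (t ∆ s).Finite := by rw [symmDiff_comm]

theorem Finite.symmDiff_trans (h₁ : (s ∆ t).Finite) (h₂ : (t ∆ u).Finite) : (s ∆ u).Finite :=
  (h₁.union h₂).subset (symmDiff_triangle s t u)

theorem symmDiff_subset_compl_union {X Y C D : Set α} (hXY : Disjoint X Y) (hC : C ⊆ X)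
    (hD : D ⊆ Y) : X ∆ C ⊆ (C ∪ D)ᶜ := by
  intro x hx hxCD
  rcases mem_symmDiff.mp hx with ⟨hxX, hxC⟩ | ⟨hxC, hxX⟩
  · exact hxCD.elim hxC fun hxD => disjoint_left.mp hXY hxX (hD hxD)
  · exact hxX (hC hxC)

theorem disjoint_smul_set_self_of_notMem_mul_inv {G : Type*} [Group G] {K : Set G} {g : G}
    (hg : g ∉ K * K⁻¹) : Disjoint (g • K) K :=
  disjoint_left.mpr fun _ ⟨k, hk, hx⟩ hxK =>
    hg ⟨_, hxK, k⁻¹, inv_mem_inv.mpr hk, by simp [← hx]⟩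

end Set

section Excess

variable {α β : Type*} {A B C : Set α}

/-- Meaningful only when `A ∆ B` is finite: `Set.ncard` of an infinite set is `0`. -/
noncomputable def excess (A B : Set α) : ℤ := (A \ B).ncard - (B \ A).ncard

@[simp]
theorem excess_self (A : Set α) : excess A A = 0 := by simp [excess]

theorem excess_image {f : α → β} (hf : Function.Injective f) (A B : Set α) :
    excess (f '' A) (f '' B) = excess A B := by
  simp only [excess, ← Set.image_sdiff hf, Set.ncard_image_of_injective _ hf]

theorem excess_eq_of_subset_inter {W : Set α} (hW : W ⊆ A ∩ B) (hA : (A \ W).Finite)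
    (hB : (B \ W).Finite) : excess A B = (A \ W).ncard - (B \ W).ncard := by
  have hAB := Set.ncard_sdiff_add_ncard_of_subset
    (Set.sdiff_subset_sdiff_right fun x hx => (hW hx).2) hA
  have hBA := Set.ncard_sdiff_add_ncard_of_subset
    (Set.sdiff_subset_sdiff_right fun x hx => (hW hx).1) hB
  have hcommon : (A \ W) \ (A \ B) = (B \ W) \ (B \ A) := by
    ext x
    simp only [Set.mem_sdiff]
    tauto
  rw [hcommon] at hAB
  unfold excess
  omega

theorem excess_add_excess (hAB : (A ∆ B).Finite) (hBC : (B ∆ C).Finite) :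
    excess A B + excess B C = excess A C := by
  set W := A ∩ B ∩ C
  have hU : ((A ∪ B ∪ C) \ W).Finite := (hAB.union hBC).subset fun x hx => by
    simp only [W, Set.mem_sdiff, Set.mem_union, Set.mem_inter_iff, Set.mem_symmDiff] at hx ⊢
    tauto
  have h {X : Set α} (hX : X ⊆ A ∪ B ∪ C) : (X \ W).Finite :=
    hU.subset (Set.sdiff_subset_sdiff_left hX)
  have hA : A ⊆ A ∪ B ∪ C := fun x hx => by simp [hx]
  have hB : B ⊆ A ∪ B ∪ C := fun x hx => by simp [hx]
  have hC : C ⊆ A ∪ B ∪ C := fun x hx => by simp [hx]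
  rw [excess_eq_of_subset_inter (fun x hx => ⟨hx.1.1, hx.1.2⟩) (h hA) (h hB),
    excess_eq_of_subset_inter (fun x hx => ⟨hx.1.2, hx.2⟩) (h hB) (h hC),
    excess_eq_of_subset_inter (fun x hx => ⟨hx.1.1, hx.2⟩) (h hA) (h hC)]
  ring

theorem eq_of_subset_of_excess_eq_zero (h : A ⊆ B) (hfin : (B \ A).Finite)
    (h0 : excess A B = 0) : A = B := by
  rw [excess, Set.sdiff_eq_empty.mpr h, Set.ncard_empty, Nat.cast_zero, zero_sub, neg_eq_zero,
    Nat.cast_eq_zero, Set.ncard_eq_zero hfin, Set.sdiff_eq_empty] at h0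
  exact h.antisymm h0

end Excess

section AlmostStabilizer

variable {G α : Type*} [Group G] [MulAction G α]

theorem excess_smul (g : G) (A B : Set α) : excess (g • A) (g • B) = excess A B := by
  simpa only [Set.image_smul] using excess_image (MulAction.injective g) A B

variable (G) in
def almostStabilizer (A : Set α) : Subgroup G where
  carrier := {g | ((g • A) ∆ A).Finite}
  one_mem' := by simp
  mul_mem' {a b} ha hb := by
    have h := (hb.smul_set (a := a)).union ha
    rw [Set.smul_set_symmDiff, ← mul_smul] at h
    exact h.subset (symmDiff_triangle _ _ _)
  inv_mem' {a} ha := by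
    have h := ha.smul_set (a := a⁻¹)
    rwa [Set.smul_set_symmDiff, inv_smul_smul, symmDiff_comm] at h

theorem mem_almostStabilizer {A : Set α} {g : G} :
    g ∈ almostStabilizer G A ↔ ((g • A) ∆ A).Finite := Iff.rfl

noncomputable def excessHom (A : Set α) : almostStabilizer G A →* Multiplicative ℤ where
  toFun g := .ofAdd (excess A ((g : G) • A))
  map_one' := by simp
  map_mul' a b := by
    have ha := mem_almostStabilizer.mp a.2
    have hb := (mem_almostStabilizer.mp b.2).smul_set (a := (a : G))
    rw [Set.smul_set_symmDiff, symmDiff_comm] at hb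
    rw [← ofAdd_add, Subgroup.coe_mul, mul_smul, ← excess_smul (a : G) A ((b : G) • A),
      excess_add_excess (symmDiff_comm A _ ▸ ha) hb]

@[simp]
theorem excessHom_apply (A : Set α) (g : almostStabilizer G A) :
    excessHom A g = .ofAdd (excess A ((g : G) • A)) := rfl

theorem mul_mem_almostStabilizer_of_compl {A : Set α} {a b : G}
    (ha : ((a • A) ∆ Aᶜ).Finite) (hb : ((b • A) ∆ Aᶜ).Finite) :
    b * a ∈ almostStabilizer G A := by
  have hb' : ((b • Aᶜ) ∆ A).Finite := by
    rwa [Set.smul_set_compl, ← compl_symmDiff_compl, compl_compl]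
  refine ((ha.smul_set (a := b)).union hb').subset ?_
  rw [Set.smul_set_symmDiff, ← mul_smul]
  exact symmDiff_triangle _ _ _

theorem almostStabilizer_index_eq_one_or_two {A : Set α}
    (h : ∀ g : G, ((g • A) ∆ A).Finite ∨ ((g • A) ∆ Aᶜ).Finite) :
    (almostStabilizer G A).index = 1 ∨ (almostStabilizer G A).index = 2 := by
  by_cases htop : ∀ g, g ∈ almostStabilizer G A
  · exact Or.inl (Subgroup.index_eq_one.mpr ((Subgroup.eq_top_iff' _).mpr htop))
  obtain ⟨a, ha⟩ := not_forall.mp htop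
  refine Or.inr (Subgroup.index_eq_two_iff.mpr ⟨a, fun b => ?_⟩)
  rw [xor_iff_iff_not]
  by_cases hb : b ∈ almostStabilizer G A
  · simpa [Subgroup.mul_mem_cancel_left _ hb, hb] using ha
  · exact iff_of_true (mul_mem_almostStabilizer_of_compl ((h a).resolve_left ha)
      ((h b).resolve_left hb)) hb

theorem exists_index_le_two_surjective_int_of_almostStabilizer [Infinite G] {A : Set α}
    (h : ∀ g : G, ((g • A) ∆ A).Finite ∨ ((g • A) ∆ Aᶜ).Finite)
    (hker : Finite (excessHom (G := G) A).ker) :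
    ∃ H : Subgroup G, (H.index = 1 ∨ H.index = 2) ∧
      ∃ φ : H →* Multiplicative ℤ, Function.Surjective φ ∧ Finite φ.ker := by
  have hindex := almostStabilizer_index_eq_one_or_two h
  have : Infinite (almostStabilizer G A) := by
    by_contra hfin
    rw [not_infinite_iff_finite] at hfin
    have hcard : Nat.card (almostStabilizer G A) * (almostStabilizer G A).index ≠ 0 :=
      mul_ne_zero Nat.card_pos.ne' (by omega)
    rw [Subgroup.card_mul_index] at hcard
    have := Nat.finite_of_card_ne_zero hcard
    exact not_finite G
  exact ⟨_, hindex, (excessHom A).exists_surjective_int_of_finite_ker hker⟩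

end AlmostStabilizer

namespace SimpleGraph

variable {V V' : Type*} {Γ : SimpleGraph V}

theorem preconnected_induce_image {Γ' : SimpleGraph V'} (φ : Γ ≃g Γ') {X : Set V}
    (hX : (Γ.induce X).Preconnected) : (Γ'.induce (φ '' X)).Preconnected :=
  (Iso.preconnected_iff (φ.induce (φ.injective.injOn.bijOn_image))).mp hX

theorem subset_or_subset_of_preconnected_induce {X P Q : Set V}
    (hX : (Γ.induce X).Preconnected) (hXPQ : X ⊆ P ∪ Q)
    (hPQ : ∀ p ∈ P, ∀ q ∈ Q, ¬Γ.Adj p q) : X ⊆ P ∨ X ⊆ Q := by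
  by_contra! h
  obtain ⟨x, hxX, hxP⟩ := Set.not_subset.mp h.1
  obtain ⟨y, hyX, hyQ⟩ := Set.not_subset.mp h.2
  obtain ⟨p⟩ := hX ⟨y, hyX⟩ ⟨x, hxX⟩
  obtain ⟨d, -, hd₁, hd₂⟩ :=
    p.exists_boundary_dart {v | v.1 ∈ P} ((hXPQ hyX).resolve_right hyQ) hxP
  exact hPQ _ hd₁ _ ((hXPQ d.snd.2).resolve_left hd₂) d.adj

theorem ComponentCompl.preconnected_induce {K : Set V} (C : Γ.ComponentCompl K) :
    (Γ.induce (C : Set V)).Preconnected := by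
  classical
  rintro ⟨u, hu', rfl⟩ ⟨v, hv', hvC⟩
  obtain ⟨p⟩ := ConnectedComponent.exact hvC
  have hp : ∀ x ∈ (p.map (Embedding.induce Kᶜ).toHom).support, x ∈ Γ.componentComplMk hu' := by
    intro x hx
    rw [Walk.support_map, List.mem_map] at hx
    obtain ⟨w, hw, rfl⟩ := hx
    exact ⟨w.2, (ConnectedComponent.sound (p.takeUntil w hw).reachable).symm.trans hvC⟩
  exact ((p.map _).induce _ hp).reachable.symm

theorem Preconnected.exists_connected_induce_superset [Nonempty V] (hΓ : Γ.Preconnected)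
    {s : Set V} (hs : s.Finite) : ∃ t, s ⊆ t ∧ t.Finite ∧ (Γ.induce t).Connected := by
  obtain ⟨v₀⟩ := ‹Nonempty V›
  let walkSupport (v : V) : Set V := {x | x ∈ (hΓ v₀ v).some.support}
  refine ⟨⋃₀ (walkSupport '' insert v₀ s), fun v hv => ?_, ?_, ?_⟩
  · exact ⟨_, Set.mem_image_of_mem _ (Set.mem_insert_of_mem _ hv), Walk.end_mem_support _⟩
  · exact ((hs.insert v₀).image _).sUnion (by rintro _ ⟨v, -, rfl⟩; exact List.finite_toSet _)
  · refine induce_sUnion_connected_of_pairwise_not_disjoint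
      ⟨_, Set.mem_image_of_mem _ (Set.mem_insert v₀ s)⟩ ?_ ?_
    · rintro _ _ ⟨v, -, rfl⟩ ⟨w, -, rfl⟩
      exact ⟨v₀, Walk.start_mem_support _, Walk.start_mem_support _⟩
    · rintro _ ⟨v, -, rfl⟩
      exact Walk.connected_induce_support _

theorem ComponentCompl.connected_induce_compl_union (hΓ : Γ.Preconnected) {K : Set V}
    (hK : (Γ.induce K).Connected) (C₁ C₂ : Γ.ComponentCompl K) :
    (Γ.induce ((C₁ : Set V) ∪ C₂)ᶜ).Connected := by
  obtain ⟨⟨u, hu⟩⟩ := hK.nonempty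
  have hKsub : K ⊆ ((C₁ : Set V) ∪ C₂)ᶜ := fun k hk hkC =>
    hkC.elim (C₁.notMem_of_mem · hk) (C₂.notMem_of_mem · hk)
  refine induce_connected_of_patches u (hKsub hu) fun {v} hv => ?_
  by_cases hvK : v ∈ K
  · exact ⟨K, hKsub, hu, hvK, hK.preconnected _ _⟩
  set D := Γ.componentComplMk hvK
  have hDsub : (D : Set V) ⊆ ((C₁ : Set V) ∪ C₂)ᶜ := by
    have hD (C : Γ.ComponentCompl K) (hvC : v ∉ C) : Disjoint (D : Set V) C :=
      ComponentCompl.pairwise_disjoint fun h => hvC (h ▸ Γ.componentComplMk_mem hvK)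
    exact fun x hx hxC => hxC.elim (Set.disjoint_left.mp (hD C₁ fun h => hv (.inl h)) hx)
      (Set.disjoint_left.mp (hD C₂ fun h => hv (.inr h)) hx)
  obtain ⟨⟨c, k⟩, hcD, hkK, hadj⟩ := D.exists_adj_boundary_pair hΓ ⟨u, hu⟩
  exact ⟨K ∪ D, Set.union_subset hKsub hDsub, .inl hu, .inr (Γ.componentComplMk_mem hvK),
    (connected_induce_union hK.preconnected D.preconnected_induce hkK hcD hadj.symm).preconnected
      _ _⟩

theorem end_supp_infinite (e : Γ.end) (K : Finset V) : (e.val (op K)).supp.Infinite :=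
  (e.val (op K)).infinite_iff_in_all_ranges.mpr fun L hKL =>
    ⟨e.val (op L), e.prop (opHomOfLE hKL)⟩

theorem exists_end_eq [LocallyFinite Γ] [Fact Γ.Preconnected] [Infinite V] {K : Finset V}
    (C : Γ.ComponentCompl K) (hC : C.supp.Infinite) : ∃ e : Γ.end, e.val (op K) = C := by
  set F := Γ.componentComplFunctor
  have (j : (Finset V)ᵒᵖ) : Finite (F.obj j) := Γ.componentCompl_finite j.unop
  have (j : (Finset V)ᵒᵖ) : Nonempty (F.obj j) := Γ.componentCompl_nonempty_of_infinite j.unop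
  have hF : F.IsMittagLeffler :=
    F.isMittagLeffler_of_exists_finite_range fun j => ⟨j, 𝟙 j, Set.toFinite _⟩
  have := F.toEventualRanges_nonempty hF
  obtain ⟨s, hs⟩ := F.toEventualRanges.eval_section_surjective_of_surjective
    (F.surjective_toEventualRanges hF) (op K) ⟨C, (Γ.infinite_iff_in_eventualRange C).mp hC⟩
  exact ⟨F.toEventualRangesSectionsEquiv s, congrArg Subtype.val hs⟩

theorem finite_compl_end_union [LocallyFinite Γ] [Fact Γ.Preconnected] {e₁ e₂ : Γ.end}
    (h : ∀ e : Γ.end, e = e₁ ∨ e = e₂) (L : Finset V) :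
    ((e₁.val (op L)).supp ∪ (e₂.val (op L)).supp)ᶜ.Finite := by
  have : Infinite V :=
    Set.infinite_univ_iff.mp ((end_supp_infinite e₁ ∅).mono (Set.subset_univ _))
  have hfin : (⋃ C ∈ {C : Γ.ComponentCompl L | C.supp.Finite}, C.supp).Finite :=
    (Set.toFinite _).biUnion fun C hC => hC
  refine (L.finite_toSet.union hfin).subset fun v hv => ?_
  by_cases hvL : v ∈ (L : Set V)
  · exact .inl hvL
  by_cases hC : (Γ.componentComplMk hvL).supp.Finite
  · exact .inr (Set.mem_biUnion hC (Γ.componentComplMk_mem hvL))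
  obtain ⟨e, he⟩ := exists_end_eq _ hC
  rcases h e with rfl | rfl
  · exact absurd (.inl (he ▸ Γ.componentComplMk_mem hvL)) hv
  · exact absurd (.inr (he ▸ Γ.componentComplMk_mem hvL)) hv

/-- A cut with sides `A` and `B`; its core is `(A ∪ B)ᶜ`. -/
structure IsCut (Γ : SimpleGraph V) (A B : Set V) : Prop where
  disjoint : Disjoint A B
  not_adj : ∀ a ∈ A, ∀ b ∈ B, ¬Γ.Adj a b
  preconnected_left : (Γ.induce A).Preconnected
  preconnected_right : (Γ.induce B).Preconnected
  infinite_left : A.Infinite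
  infinite_right : B.Infinite
  finite_core : (A ∪ B)ᶜ.Finite
  preconnected_core : (Γ.induce (A ∪ B)ᶜ).Preconnected

namespace IsCut

variable {A B : Set V}

theorem symm (hc : IsCut Γ A B) : IsCut Γ B A where
  disjoint := hc.disjoint.symm
  not_adj b hb a ha hba := hc.not_adj a ha b hb hba.symm
  preconnected_left := hc.preconnected_right
  preconnected_right := hc.preconnected_left
  infinite_left := hc.infinite_right
  infinite_right := hc.infinite_left
  finite_core := Set.union_comm A B ▸ hc.finite_core
  preconnected_core := Set.union_comm A B ▸ hc.preconnected_core

theorem image_core (φ : Γ ≃g Γ) : φ '' (A ∪ B)ᶜ = (φ '' A ∪ φ '' B)ᶜ := by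
  rw [Set.image_compl_eq φ.bijective, Set.image_union]

theorem image (hc : IsCut Γ A B) (φ : Γ ≃g Γ) : IsCut Γ (φ '' A) (φ '' B) where
  disjoint := (Set.disjoint_image_iff φ.injective).mpr hc.disjoint
  not_adj := by
    rintro _ ⟨a, ha, rfl⟩ _ ⟨b, hb, rfl⟩ hab
    exact hc.not_adj a ha b hb (φ.map_adj_iff.mp hab)
  preconnected_left := preconnected_induce_image φ hc.preconnected_left
  preconnected_right := preconnected_induce_image φ hc.preconnected_right
  infinite_left := hc.infinite_left.image φ.injective.injOn
  infinite_right := hc.infinite_right.image φ.injective.injOn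
  finite_core := image_core (B := B) φ ▸ hc.finite_core.image φ
  preconnected_core := image_core (B := B) φ ▸ preconnected_induce_image φ hc.preconnected_core

theorem mem_core_of_adj (hc : IsCut Γ A B) {a x : V} (ha : a ∈ A) (hx : x ∉ A)
    (hax : Γ.Adj a x) : x ∈ (A ∪ B)ᶜ := by
  rintro (hxA | hxB)
  exacts [hx hxA, hc.not_adj a ha x hxB hax]

theorem symmDiff_compl_finite (hc : IsCut Γ A B) : (B ∆ Aᶜ).Finite :=
  hc.finite_core.subset fun x hx => by
    simp only [Set.mem_symmDiff, Set.mem_compl_iff, Set.mem_union] at hx ⊢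
    rcases hx with ⟨hxB, hxA⟩ | ⟨hxA, hxB⟩
    · exact absurd hxB (Set.disjoint_left.mp hc.disjoint (not_not.mp hxA))
    · tauto

theorem subset_or_subset (hc : IsCut Γ A B) {X : Set V} (hX : (Γ.induce X).Preconnected)
    (hXK : Disjoint X (A ∪ B)ᶜ) : X ⊆ A ∨ X ⊆ B :=
  subset_or_subset_of_preconnected_induce hX (Set.disjoint_compl_right_iff_subset.mp hXK)
    hc.not_adj

theorem symmDiff_finite_of_pieces (hc : IsCut Γ A B) {C₁ C₂ : Set V}
    (hC₁ : (Γ.induce C₁).Preconnected) (hC₂ : (Γ.induce C₂).Preconnected)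
    (hC₁K : Disjoint C₁ (A ∪ B)ᶜ) (hC₂K : Disjoint C₂ (A ∪ B)ᶜ) (hfin : (C₁ ∪ C₂)ᶜ.Finite) :
    ((A ∆ C₁).Finite ∧ (B ∆ C₂).Finite) ∨ ((A ∆ C₂).Finite ∧ (B ∆ C₁).Finite) := by
  have hfin' : (C₂ ∪ C₁)ᶜ.Finite := Set.union_comm C₁ C₂ ▸ hfin
  rcases hc.subset_or_subset hC₁ hC₁K with h₁ | h₁ <;>
    rcases hc.subset_or_subset hC₂ hC₂K with h₂ | h₂
  · refine absurd (hfin.subset ?_) hc.infinite_right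
    exact Set.subset_compl_iff_disjoint_right.mpr
      (hc.disjoint.symm.mono_right (Set.union_subset h₁ h₂))
  · exact .inl ⟨hfin.subset (Set.symmDiff_subset_compl_union hc.disjoint h₁ h₂),
      hfin'.subset (Set.symmDiff_subset_compl_union hc.disjoint.symm h₂ h₁)⟩
  · exact .inr ⟨hfin'.subset (Set.symmDiff_subset_compl_union hc.disjoint h₂ h₁),
      hfin.subset (Set.symmDiff_subset_compl_union hc.disjoint.symm h₁ h₂)⟩
  · refine absurd (hfin.subset ?_) hc.infinite_left
    exact Set.subset_compl_iff_disjoint_right.mpr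
      (hc.disjoint.mono_right (Set.union_subset h₁ h₂))

/-- Both cuts are compared with the two infinite components outside their cores, which the two
ends provide. -/
theorem image_symmDiff_finite [LocallyFinite Γ] [Fact Γ.Preconnected]
    (hΓ : HasExactlyTwoEnds Γ) (hc : IsCut Γ A B) (φ : Γ ≃g Γ) :
    ((φ '' A) ∆ A).Finite ∨ ((φ '' A) ∆ B).Finite := by
  obtain ⟨e₁, e₂, -, hall⟩ := hΓ
  set L := (hc.finite_core.union (hc.image φ).finite_core).toFinset
  have pieces {A' B' : Set V} (hc' : IsCut Γ A' B') (hL : (A' ∪ B')ᶜ ⊆ L) :=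
    hc'.symmDiff_finite_of_pieces (ComponentCompl.preconnected_induce (e₁.val (op L)))
      (ComponentCompl.preconnected_induce (e₂.val (op L)))
      ((e₁.val (op L)).disjoint_right.symm.mono_right hL)
      ((e₂.val (op L)).disjoint_right.symm.mono_right hL) (finite_compl_end_union hall L)
  have hL : (L : Set V) = (A ∪ B)ᶜ ∪ (φ '' A ∪ φ '' B)ᶜ := Set.Finite.coe_toFinset _
  rcases pieces hc (hL ▸ Set.subset_union_left) with ⟨hA₁, hB₂⟩ | ⟨hA₂, hB₁⟩ <;>
    rcases pieces (hc.image φ) (hL ▸ Set.subset_union_right) with ⟨hφ₁, -⟩ | ⟨hφ₂, -⟩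
  · exact .inl (hφ₁.symmDiff_trans (Set.finite_symmDiff_comm.mp hA₁))
  · exact .inr (hφ₂.symmDiff_trans (Set.finite_symmDiff_comm.mp hB₂))
  · exact .inr (hφ₁.symmDiff_trans (Set.finite_symmDiff_comm.mp hB₁))
  · exact .inl (hφ₂.symmDiff_trans (Set.finite_symmDiff_comm.mp hA₂))

theorem image_ne_left (hΓ : Γ.Preconnected) (hc : IsCut Γ A B) (φ : Γ ≃g Γ)
    (hφ : Disjoint (φ '' (A ∪ B)ᶜ) (A ∪ B)ᶜ) : φ '' A ≠ A := by
  intro hA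
  obtain ⟨a, ha⟩ := hc.infinite_left.nonempty
  obtain ⟨b, hb⟩ := hc.infinite_right.nonempty
  obtain ⟨p⟩ := hΓ a b
  obtain ⟨d, -, hd₁, hd₂⟩ := p.exists_boundary_dart A ha (Set.disjoint_right.mp hc.disjoint hb)
  have hφd₁ : φ d.fst ∈ A := hA ▸ Set.mem_image_of_mem φ hd₁
  have hφd₂ : φ d.snd ∉ A := fun h => hd₂ (φ.injective.mem_set_image.mp (by rwa [hA]))
  exact Set.disjoint_left.mp hφ (Set.mem_image_of_mem φ (hc.mem_core_of_adj hd₁ hd₂ d.adj))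
    (hc.mem_core_of_adj hφd₁ hφd₂ (φ.map_adj_iff.mpr d.adj))

theorem image_core_subset_left (hΓ : Γ.Preconnected) (hc : IsCut Γ A B) (φ : Γ ≃g Γ)
    (hfin : ((φ '' A) ∆ A).Finite) (h0 : excess A (φ '' A) = 0)
    (hφ : Disjoint (φ '' (A ∪ B)ᶜ) (A ∪ B)ᶜ) : φ '' (A ∪ B)ᶜ ⊆ A ∧ B ⊆ φ '' B := by
  have hc' := hc.image φ
  rcases hc.subset_or_subset (preconnected_induce_image φ hc.preconnected_core) hφ with
    hKA | hKB
  · refine ⟨hKA, ?_⟩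
    rw [image_core] at hKA
    refine (hc'.subset_or_subset hc.preconnected_right
      (hc.disjoint.symm.mono_right hKA)).resolve_left fun hBA => hc.infinite_right ?_
    exact hfin.subset fun b hb => .inl ⟨hBA hb, Set.disjoint_right.mp hc.disjoint hb⟩
  · rw [image_core] at hKB
    rcases hc'.subset_or_subset hc.preconnected_left (hc.disjoint.mono_right hKB) with
      hAA | hAB
    · refine absurd (eq_of_subset_of_excess_eq_zero hAA ?_ h0).symm (hc.image_ne_left hΓ φ hφ)
      exact hfin.subset fun x hx => .inl hx
    · refine absurd (hfin.subset fun a ha => .inr ⟨ha, ?_⟩) hc.infinite_left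
      exact Set.disjoint_right.mp hc'.disjoint (hAB ha)

end IsCut

end SimpleGraph

open SimpleGraph in
theorem HasExactlyTwoEnds.exists_isCut {V : Type*} {Γ : SimpleGraph V} [LocallyFinite Γ]
    [Fact Γ.Preconnected] (hΓ : HasExactlyTwoEnds Γ) : ∃ A B, IsCut Γ A B := by
  obtain ⟨e₁, e₂, hne, hall⟩ := hΓ
  have : Infinite V :=
    Set.infinite_univ_iff.mp ((end_supp_infinite e₁ ∅).mono (Set.subset_univ _))
  obtain ⟨K₀, hK₀⟩ : ∃ K₀ : Finset V, e₁.val (op K₀) ≠ e₂.val (op K₀) := by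
    by_contra! heq
    exact hne (Subtype.ext (funext fun K => heq K.unop))
  obtain ⟨K, hK₀K, hKfin, hK⟩ :=
    (Fact.out : Γ.Preconnected).exists_connected_induce_superset K₀.finite_toSet
  obtain ⟨L, hL⟩ : ∃ L : Finset V, (L : Set V) = K := ⟨hKfin.toFinset, hKfin.coe_toFinset⟩
  have hK₀L : K₀ ⊆ L := Finset.coe_subset.mp (hL ▸ hK₀K)
  have hne : e₁.val (op L) ≠ e₂.val (op L) := fun heq => hK₀ (by
    rw [← e₁.prop (opHomOfLE hK₀L), ← e₂.prop (opHomOfLE hK₀L), heq])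
  have hdisj := ComponentCompl.pairwise_disjoint hne
  exact ⟨(e₁.val (op L)).supp, (e₂.val (op L)).supp, {
    disjoint := hdisj
    not_adj := fun a ha b hb hab => Set.disjoint_left.mp hdisj
      (ComponentCompl.mem_of_adj a b ha (ComponentCompl.notMem_of_mem hb) hab) hb
    preconnected_left := ComponentCompl.preconnected_induce _
    preconnected_right := ComponentCompl.preconnected_induce _
    infinite_left := end_supp_infinite e₁ L
    infinite_right := end_supp_infinite e₂ L
    finite_core := finite_compl_end_union hall L
    preconnected_core :=
      (ComponentCompl.connected_induce_compl_union Fact.out (hL ▸ hK) _ _).preconnected }⟩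

namespace cayleyGraph

variable {G : Type*} [Group G] {S : Set G}

def mulLeftIso (g : G) : cayleyGraph G S ≃g cayleyGraph G S where
  toEquiv := Equiv.mulLeft g
  map_rel_iff' := by simp [cayleyGraph, mul_assoc]

@[simp]
theorem mulLeftIso_apply (g x : G) : mulLeftIso (S := S) g x = g * x := rfl

theorem image_mulLeftIso (g : G) (X : Set G) : mulLeftIso (S := S) g '' X = g • X :=
  show (g • ·) '' X = g • X from Set.image_smul

theorem preconnected (hgen : Subgroup.closure S = ⊤) : (cayleyGraph G S).Preconnected := by
  suffices h : ∀ x, (cayleyGraph G S).Reachable 1 x from fun x y => (h x).symm.trans (h y)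
  intro x
  induction (hgen ▸ Subgroup.mem_top x : x ∈ Subgroup.closure S) using
    Subgroup.closure_induction with
  | mem s hs =>
    by_cases hs1 : s = 1
    · rw [hs1]
    · exact SimpleGraph.Adj.reachable ⟨Ne.symm hs1, .inl (by simpa using hs)⟩
  | one => rfl
  | mul a b _ _ ha hb => exact ha.trans (by simpa using hb.map (mulLeftIso a).toHom)
  | inv a _ ha => simpa using (ha.map (mulLeftIso a⁻¹).toHom).symm

noncomputable abbrev locallyFinite (hfin : S.Finite) : (cayleyGraph G S).LocallyFinite :=
  fun v => Set.Finite.fintype <| ((hfin.union hfin.inv).image (v * ·)).subset fun y hy =>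
    ⟨v⁻¹ * y, hy.2.imp id fun h => by simpa using Set.inv_mem_inv.mpr h, by group⟩

end cayleyGraph

namespace SimpleGraph.IsCut

open cayleyGraph

variable {G : Type*} [Group G] {S : Set G} {A B : Set G}

theorem smul_symmDiff_finite [(cayleyGraph G S).LocallyFinite]
    [Fact (cayleyGraph G S).Preconnected] (hΓ : HasExactlyTwoEnds (cayleyGraph G S))
    (hc : (cayleyGraph G S).IsCut A B) (g : G) :
    ((g • A) ∆ A).Finite ∨ ((g • A) ∆ Aᶜ).Finite := by
  rw [← image_mulLeftIso (S := S)]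
  exact (hc.image_symmDiff_finite hΓ (mulLeftIso g)).imp_right
    (·.symmDiff_trans hc.symmDiff_compl_finite)

theorem finite_ker_excessHom (hΓ : (cayleyGraph G S).Preconnected)
    (hc : (cayleyGraph G S).IsCut A B) : Finite (excessHom (G := G) A).ker := by
  set K := (A ∪ B)ᶜ
  have hstep (g : almostStabilizer G A) (hg : g ∈ (excessHom A).ker)
      (hgK : Disjoint ((g : G) • K) K) : B ⊆ (g : G) • B := by
    have := hc.image_core_subset_left hΓ (mulLeftIso g)
      (by simpa only [image_mulLeftIso] using mem_almostStabilizer.mp g.2)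
      (by simpa [image_mulLeftIso] using MonoidHom.mem_ker.mp hg)
      (by simpa only [image_mulLeftIso] using hgK)
    simpa only [image_mulLeftIso] using this.2
  have hsub (g : almostStabilizer G A) (hg : g ∈ (excessHom A).ker) : (g : G) ∈ K * K⁻¹ := by
    by_contra hgK
    have hd := Set.disjoint_smul_set_self_of_notMem_mul_inv hgK
    have h₁ := hstep g hg hd
    have h₂ := hstep g⁻¹ ((excessHom A).ker.inv_mem hg)
      (Set.disjoint_smul_set_left.mpr (by simpa using hd.symm))
    have hgB : (g : G) • B = B :=
      le_antisymm (Set.smul_set_subset_iff_subset_inv_smul_set.mpr (by simpa using h₂)) h₁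
    refine hc.symm.image_ne_left hΓ (mulLeftIso g) ?_ (by rwa [image_mulLeftIso])
    rwa [Set.union_comm, image_mulLeftIso]
  have : Finite ↥(K * K⁻¹) := (hc.finite_core.mul hc.finite_core.inv).to_subtype
  refine Finite.of_injective (fun g : (excessHom A).ker => (⟨g.1, hsub g.1 g.2⟩ : ↥(K * K⁻¹)))
    fun g h hgh => ?_
  simp only [Subtype.mk.injEq] at hgh
  exact Subtype.val_injective (Subtype.val_injective hgh)

end SimpleGraph.IsCut

/-- A finitely generated two-ended group `G` has a subgroup `H` of index at most `2`
admitting a surjective homomorphism onto `ℤ` with finite kernel; consequently `G`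
contains a subgroup of index exactly `2`. -/
theorem stmt_17 {G : Type*} [Group G] (S : Set G) (hfin : S.Finite)
    (hgen : Subgroup.closure S = ⊤)
    (htwo : HasExactlyTwoEnds (cayleyGraph G S)) :
    (∃ H : Subgroup G, (H.index = 1 ∨ H.index = 2) ∧
      ∃ φ : H →* Multiplicative ℤ, Function.Surjective φ ∧ Finite φ.ker) ∧
    (∃ K : Subgroup G, K.index = 2) := by
  let _ := cayleyGraph.locallyFinite hfin
  have : Fact (cayleyGraph G S).Preconnected := ⟨cayleyGraph.preconnected hgen⟩
  obtain ⟨A, B, hc⟩ := htwo.exists_isCut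
  have : Infinite G := Set.infinite_univ_iff.mp (hc.infinite_left.mono (Set.subset_univ _))
  obtain ⟨H, hH, φ, hφ, hker⟩ := exists_index_le_two_surjective_int_of_almostStabilizer
    (hc.smul_symmDiff_finite htwo) (hc.finite_ker_excessHom Fact.out)
  exact ⟨⟨H, hH, φ, hφ, hker⟩, H.exists_index_eq_two_of_surjective_int hH φ hφ⟩
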